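/- arXiv:1209.2045 — 9 statements merged into one kernel-verified Lean document; each statement's English description precedes it below -/
import Mathlib

section
/- Let a,b>0 and let (γ,δ)∈ℝ² satisfy the strict inequalities γ > −2/a, δ < 2/b and γ−δ < 2. Then the unique smooth solution (u,v) on ℂ∖{0} of the system Δu = 4(e^{au} − e^{v−u}), Δv = 4(e^{v−u} − e^{−bv}) with asymptotic data (γ,δ) satisfies the stronger asymptotics at the origin: the functions z ↦ u(z) − γ log|z| and z ↦ v(z) − δ log|z| are bounded on some punctured neighbourhood of 0. -/
open Filter

/-- The Euclidean Laplacian of `f : ℂ → ℝ`, viewing `ℂ ≅ ℝ²` with orthonormal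
directions `1` and `I`. -/
noncomputable def lap (f : ℂ → ℝ) (z : ℂ) : ℝ :=
  iteratedFDeriv ℝ 2 f z ![1, 1] + iteratedFDeriv ℝ 2 f z ![Complex.I, Complex.I]

/-- `f` is smooth on `ℂ ∖ {0}`. -/
def SmoothOffZero (f : ℂ → ℝ) : Prop := ContDiffOn ℝ (⊤ : ℕ∞) f {(0 : ℂ)}ᶜ

/-- `f z → 0` as `|z| → ∞`. -/
def TendstoZeroAtInfty (f : ℂ → ℝ) : Prop :=
  Tendsto f (comap (fun z : ℂ => ‖z‖) atTop) (nhds 0)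

/-- `f z / log |z| → γ` as `z → 0`. -/
def LogAsymAtZero (γ : ℝ) (f : ℂ → ℝ) : Prop :=
  Tendsto (fun z : ℂ => f z / Real.log (‖z‖)) (nhdsWithin 0 {(0 : ℂ)}ᶜ) (nhds γ)

/-- `(u, v)` is a smooth solution on `ℂ ∖ {0}` of the two-function tt*-Toda system
`Δu = 4(e^{au} − e^{v−u})`, `Δv = 4(e^{v−u} − e^{−bv})`. -/
def IsTodaSol (a b : ℝ) (u v : ℂ → ℝ) : Prop :=
  SmoothOffZero u ∧ SmoothOffZero v ∧
  ∀ z : ℂ, z ≠ 0 →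
    lap u z = 4 * (Real.exp (a * u z) - Real.exp (v z - u z)) ∧
    lap v z = 4 * (Real.exp (v z - u z) - Real.exp (-(b * v z)))

/-- `(u, v)` has asymptotic data `(γ, δ)`: `u, v → 0` at `∞` and
`u(z)/log|z| → γ`, `v(z)/log|z| → δ` at `0`. -/
def HasAsymData (γ δ : ℝ) (u v : ℂ → ℝ) : Prop :=
  TendstoZeroAtInfty u ∧ TendstoZeroAtInfty v ∧ LogAsymAtZero γ u ∧ LogAsymAtZero δ v

/-!
The strict inequalities say `aγ`, `δ - γ` and `-bδ` all exceed `-2`, so since `u ~ γ log|z|` and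
`v ~ δ log|z|`, for some `κ > 0` each of `e^{au}`, `e^{v-u}`, `e^{-bv}` is at most `|z|^{κ-2}` near
`0`; hence `|Δu|, |Δv| ≤ 4|z|^{κ-2}`. Adding the barrier `(4/κ²)|z|^κ`, whose Laplacian is
`4|z|^{κ-2}`, to `±(u - γ log|z|)` gives a subharmonic function on a punctured disc which is
`o(log|z|)` at `0`. Such a function is bounded above: on an annulus `ρ ≤ |z| ≤ r` compare it with
`-t log|z|` by the maximum principle, with `ρ` so small that the comparison holds on the inner
circle, and let `t → 0`. The same argument applies to `v`.
-/

open InnerProductSpace Laplacian Filter Topology Metric Asymptotics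

section LineRestriction

variable {E F : Type*} [NormedAddCommGroup E] [InnerProductSpace ℝ E]
  [NormedAddCommGroup F] [NormedSpace ℝ F]

theorem iteratedFDeriv_two_apply_same_eq_iteratedDeriv_line {f : E → F} {x : E}
    (hf : ContDiffAt ℝ 2 f x) (v : E) :
    iteratedFDeriv ℝ 2 f x ![v, v] = iteratedDeriv 2 (fun t : ℝ => f (x + t • v)) 0 := by
  have hderiv : deriv (fun t : ℝ => x + t • v) = fun _ => v := funext fun t =>
    ((hasDerivAt_id t).smul_const v |>.const_add x).deriv.trans (one_smul ℝ v)
  have hvv : ![v, v] = fun _ => v := by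
    ext i; fin_cases i <;> rfl
  have hcomp := iteratedDeriv_vcomp_two (x := (0 : ℝ)) (by simpa using hf)
    (show ContDiffAt ℝ 2 (fun t : ℝ => x + t • v) 0 by fun_prop)
  rw [show (fun t : ℝ => f (x + t • v)) = f ∘ fun t => x + t • v from rfl, hcomp, hvv,
    iteratedDeriv_succ, iteratedDeriv_one, hderiv, deriv_const, map_zero, add_zero,
    zero_smul, add_zero]

end LineRestriction

/-- If `g''(t) > 0` then `g` also has a local minimum at `t`, so it is locally constant. -/
theorem IsLocalMax.iteratedDeriv_two_nonpos {g : ℝ → ℝ} {t : ℝ} (h : IsLocalMax g t)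
    (hc : ContinuousAt g t) : iteratedDeriv 2 g t ≤ 0 := by
  by_contra! hpos
  rw [iteratedDeriv_succ, iteratedDeriv_one] at hpos
  have hconst : g =ᶠ[𝓝 t] fun _ => g t :=
    ((isLocalMin_of_deriv_deriv_pos hpos h.deriv_eq_zero hc).and h).mono
      fun s hs => le_antisymm hs.2 hs.1
  have hderiv : deriv g =ᶠ[𝓝 t] fun _ => 0 :=
    hconst.eventually_nhds.mono fun s (hs : g =ᶠ[𝓝 s] fun _ => g t) => by simpa using hs.deriv_eq
  simp [hderiv.deriv_eq] at hpos

section Radial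

open scoped RealInnerProductSpace

variable {E : Type*} [NormedAddCommGroup E] [InnerProductSpace ℝ E]

theorem iteratedFDeriv_two_comp_norm_sq_apply_same {φ : ℝ → ℝ} {x : E}
    (hφ : ContDiffAt ℝ 2 φ (‖x‖ ^ 2)) (v : E) :
    iteratedFDeriv ℝ 2 (fun y => φ (‖y‖ ^ 2)) x ![v, v] =
      4 * ⟪x, v⟫ ^ 2 * iteratedDeriv 2 φ (‖x‖ ^ 2) + 2 * ‖v‖ ^ 2 * deriv φ (‖x‖ ^ 2) := by
  set q : ℝ → ℝ := fun t => ‖x + t • v‖ ^ 2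
  have hq : ∀ t, HasDerivAt q (2 * ⟪x, v⟫ + 2 * ‖v‖ ^ 2 * t) t := fun t => by
    refine (((hasDerivAt_id t).smul_const v).const_add x).norm_sq.congr_deriv ?_
    simp only [id_eq, one_smul, inner_add_left, real_inner_smul_left, real_inner_self_eq_norm_sq]
    ring
  have hq' : deriv q = fun t => 2 * ⟪x, v⟫ + 2 * ‖v‖ ^ 2 * t := funext fun t => (hq t).deriv
  have hq'' : deriv (fun t : ℝ => 2 * ⟪x, v⟫ + 2 * ‖v‖ ^ 2 * t) 0 = 2 * ‖v‖ ^ 2 := by simp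
  have hq0 : q 0 = ‖x‖ ^ 2 := by simp [q]
  have hφq : ContDiffAt ℝ 2 (fun y => φ (‖y‖ ^ 2)) x :=
    hφ.comp x (contDiff_norm_sq ℝ).contDiffAt
  rw [iteratedFDeriv_two_apply_same_eq_iteratedDeriv_line hφq v,
    show (fun t : ℝ => φ (‖x + t • v‖ ^ 2)) = φ ∘ q from rfl,
    iteratedDeriv_comp_two (hq0 ▸ hφ) (show ContDiffAt ℝ 2 q 0 from
      ((contDiff_norm_sq ℝ).comp (by fun_prop : ContDiff ℝ 2 fun t : ℝ => x + t • v)).contDiffAt)]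
  simp only [iteratedDeriv_succ, iteratedDeriv_zero, hq', hq0, hq'']
  ring

variable [FiniteDimensional ℝ E]

theorem laplacian_comp_norm_sq {φ : ℝ → ℝ} {x : E} (hφ : ContDiffAt ℝ 2 φ (‖x‖ ^ 2)) :
    Δ (fun y : E => φ (‖y‖ ^ 2)) x =
      4 * ‖x‖ ^ 2 * iteratedDeriv 2 φ (‖x‖ ^ 2) + 2 * Module.finrank ℝ E * deriv φ (‖x‖ ^ 2) := by
  set b := stdOrthonormalBasis ℝ E
  rw [laplacian_eq_iteratedFDeriv_orthonormalBasis _ b]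
  simp only [iteratedFDeriv_two_comp_norm_sq_apply_same hφ, b.norm_eq_one, Finset.sum_add_distrib,
    ← Finset.sum_mul, ← Finset.mul_sum, b.sum_sq_inner_left, Finset.sum_const, Finset.card_univ,
    Fintype.card_fin, nsmul_eq_mul, one_pow]
  ring

theorem laplacian_norm_sq (x : E) : Δ (fun y : E => ‖y‖ ^ 2) x = 2 * Module.finrank ℝ E := by
  simpa [iteratedDeriv_succ] using laplacian_comp_norm_sq (φ := id) (x := x) contDiffAt_id

theorem laplacian_norm_rpow {x : E} (hx : x ≠ 0) (p : ℝ) :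
    Δ (fun y : E => ‖y‖ ^ p) x = p * (p + Module.finrank ℝ E - 2) * ‖x‖ ^ (p - 2) := by
  have hx' : 0 < ‖x‖ := norm_pos_iff.mpr hx
  have hpow : ∀ y : E, ‖y‖ ^ p = (‖y‖ ^ 2) ^ (p / 2) := fun y => by
    rw [← Real.rpow_natCast, ← Real.rpow_mul (norm_nonneg y), Nat.cast_ofNat,
      mul_div_cancel₀ p two_ne_zero]
  simp only [hpow]
  rw [laplacian_comp_norm_sq (Real.contDiffAt_rpow_const_of_ne (by positivity)),
    iteratedDeriv_eq_iterate, Real.iter_deriv_rpow_const, Real.deriv_rpow_const]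
  have hsq : ∀ r : ℝ, (‖x‖ ^ 2) ^ r = ‖x‖ ^ (2 * r) := fun r => by
    rw [← Real.rpow_natCast, ← Real.rpow_mul (norm_nonneg x), Nat.cast_ofNat]
  have hshift : ‖x‖ ^ (p - 2) = ‖x‖ ^ (p - 4) * ‖x‖ ^ 2 := by
    rw [← Real.rpow_natCast, ← Real.rpow_add hx']; ring_nf
  have hdesc : (descPochhammer ℝ 2).eval (p / 2) = p / 2 * (p / 2 - 1) := by
    simp [descPochhammer_succ_right]
  rw [hsq, hsq, hdesc, hshift, show 2 * (p / 2 - ((2 : ℕ) : ℝ)) = p - 4 by push_cast; ring,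
    show 2 * (p / 2 - 1) = p - 4 + 2 by ring, Real.rpow_add hx', Real.rpow_two]
  ring

end Radial

section MaximumPrinciple

variable {E : Type*} [NormedAddCommGroup E] [InnerProductSpace ℝ E] [FiniteDimensional ℝ E]
  {f : E → ℝ} {K : Set E}

theorem IsLocalMax.laplacian_nonpos {x : E} (h : IsLocalMax f x) (hf : ContDiffAt ℝ 2 f x) :
    Δ f x ≤ 0 := by
  rw [laplacian_eq_iteratedFDeriv_stdOrthonormalBasis]
  refine Finset.sum_nonpos fun i _ => ?_
  rw [iteratedFDeriv_two_apply_same_eq_iteratedDeriv_line hf]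
  set ℓ : ℝ → E := fun t => x + t • stdOrthonormalBasis ℝ E i
  have hℓ : ContinuousAt ℓ 0 := by fun_prop
  have hℓ0 : ℓ 0 = x := by simp [ℓ]
  exact ((hℓ0 ▸ h).comp_continuous hℓ).iteratedDeriv_two_nonpos ((hℓ0 ▸ hf.continuousAt).comp hℓ)

theorem IsCompact.exists_mem_frontier_isMaxOn_of_laplacian_pos (hK : IsCompact K)
    (hne : K.Nonempty) (hcont : ContinuousOn f K) (hf : ∀ x ∈ interior K, ContDiffAt ℝ 2 f x)
    (hpos : ∀ x ∈ interior K, 0 < Δ f x) : ∃ x ∈ frontier K, IsMaxOn f K x := by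
  obtain ⟨x, hxK, hmax⟩ := hK.exists_isMaxOn hne hcont
  refine ⟨x, ⟨subset_closure hxK, fun hint => ?_⟩, hmax⟩
  exact (hpos x hint).not_ge <|
    (hmax.isLocalMax (mem_interior_iff_mem_nhds.mp hint)).laplacian_nonpos (hf x hint)

theorem IsCompact.le_of_forall_frontier_le_of_laplacian_nonneg [Nontrivial E] (hK : IsCompact K)
    (hcont : ContinuousOn f K) (hf : ∀ x ∈ interior K, ContDiffAt ℝ 2 f x)
    (hnonneg : ∀ x ∈ interior K, 0 ≤ Δ f x) {A : ℝ} (hA : ∀ x ∈ frontier K, f x ≤ A) :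
    ∀ x ∈ K, f x ≤ A := by
  obtain ⟨R, hR⟩ := hK.isBounded.subset_closedBall 0
  intro x hx
  refine le_of_forall_pos_le_add fun ε hε => ?_
  set c := ε / (R ^ 2 + 1)
  have hc : 0 < c := by positivity
  have hsq : ContDiff ℝ 2 fun y : E => ‖y‖ ^ 2 := contDiff_norm_sq ℝ
  have hcsq : ContDiff ℝ 2 (c • fun y : E => ‖y‖ ^ 2) := hsq.const_smul c
  set g : E → ℝ := f + c • fun y => ‖y‖ ^ 2
  have hgpos : ∀ y ∈ interior K, 0 < Δ g y := fun y hy => by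
    rw [(hf y hy).laplacian_add hcsq.contDiffAt, laplacian_smul c hsq.contDiffAt,
      laplacian_norm_sq]
    have : (0 : ℝ) < Module.finrank ℝ E := Nat.cast_pos.mpr Module.finrank_pos
    simp only [smul_eq_mul]
    nlinarith [hnonneg y hy]
  obtain ⟨y, hy, hmax⟩ := hK.exists_mem_frontier_isMaxOn_of_laplacian_pos ⟨x, hx⟩
    (hcont.add hcsq.continuous.continuousOn) (fun y hy => (hf y hy).add hcsq.contDiffAt) hgpos
  have hbound : c * ‖y‖ ^ 2 ≤ ε := by
    have : ‖y‖ ^ 2 ≤ R ^ 2 + 1 := by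
      have := mem_closedBall_zero_iff.mp (hR (hK.isClosed.frontier_subset hy))
      nlinarith [norm_nonneg y]
    calc c * ‖y‖ ^ 2 ≤ c * (R ^ 2 + 1) := by gcongr
      _ = ε := div_mul_cancel₀ ε (by positivity)
  have hgx : g x ≤ g y := hmax hx
  simp only [g, Pi.add_apply, Pi.smul_apply, smul_eq_mul] at hgx
  nlinarith [hA y hy, norm_nonneg x]

end MaximumPrinciple

theorem eventually_nhdsNE_zero_iff {E : Type*} [SeminormedAddCommGroup E] {P : E → Prop} :
    (∀ᶠ z in 𝓝[≠] 0, P z) ↔ ∃ ε > 0, ∀ z, z ≠ 0 → ‖z‖ < ε → P z := by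
  simp only [eventually_nhdsWithin_iff, Metric.eventually_nhds_iff, dist_zero_right,
    Set.mem_compl_singleton_iff]
  exact exists_congr fun _ => and_congr_right fun _ => forall_congr' fun _ => imp.swap

theorem tendsto_log_norm_nhdsNE_zero :
    Tendsto (fun z : ℂ => Real.log ‖z‖) (𝓝[≠] 0) atBot :=
  Real.tendsto_log_nhdsGT_zero.comp tendsto_norm_nhdsNE_zero

theorem isLittleO_sub_mul_log_norm {f : ℂ → ℝ} {γ : ℝ}
    (hf : Tendsto (fun z => f z / Real.log ‖z‖) (𝓝[≠] 0) (𝓝 γ)) :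
    (fun z => f z - γ * Real.log ‖z‖) =o[𝓝[≠] 0] fun z => Real.log ‖z‖ := by
  have hlog : ∀ᶠ z in 𝓝[≠] (0 : ℂ), Real.log ‖z‖ ≠ 0 :=
    (tendsto_log_norm_nhdsNE_zero.eventually_lt_atBot 0).mono fun _ h => h.ne
  rw [isLittleO_iff_tendsto' (hlog.mono fun _ h h0 => absurd h0 h)]
  have hsub := hf.sub_const γ
  rw [sub_self] at hsub
  refine hsub.congr' (hlog.mono fun z hz => ?_)
  dsimp only
  rw [sub_div, mul_div_cancel_right₀ γ hz]

theorem isLittleO_norm_rpow_log_norm {κ : ℝ} (hκ : 0 < κ) :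
    (fun z : ℂ => ‖z‖ ^ κ) =o[𝓝[≠] 0] fun z => Real.log ‖z‖ := by
  have hpow : Tendsto (fun z : ℂ => ‖z‖ ^ κ) (𝓝[≠] 0) (𝓝 (‖(0 : ℂ)‖ ^ κ)) :=
    ((continuous_norm.tendsto 0).rpow_const (Or.inr hκ.le)).mono_left nhdsWithin_le_nhds
  exact (hpow.isBigO_one ℝ).trans_isLittleO <| (isLittleO_one_left_iff ℝ).mpr <|
    tendsto_abs_atBot_atTop.comp tendsto_log_norm_nhdsNE_zero

theorem laplacian_log_norm {z : ℂ} (hz : z ≠ 0) : Δ (fun w : ℂ => Real.log ‖w‖) z = 0 :=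
  (analyticAt_id.harmonicAt_log_norm hz).2.self_of_nhds

theorem contDiffAt_log_norm {z : ℂ} (hz : z ≠ 0) :
    ContDiffAt ℝ 2 (fun w : ℂ => Real.log ‖w‖) z :=
  (analyticAt_id.harmonicAt_log_norm hz).1

theorem add_mul_log_norm_le_of_laplacian_nonneg {f : ℂ → ℝ} {ρ r t M : ℝ} (hρ : 0 < ρ)
    (hr : r ≤ 1) (ht : 0 ≤ t) (hM : 0 ≤ M)
    (hf : ∀ y : ℂ, ρ ≤ ‖y‖ → ‖y‖ ≤ r → ContDiffAt ℝ 2 f y ∧ 0 ≤ Δ f y)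
    (hinner : ∀ y : ℂ, ‖y‖ = ρ → f y ≤ -(t * Real.log ρ)) (houter : ∀ y : ℂ, ‖y‖ = r → f y ≤ M)
    {z : ℂ} (hρz : ρ ≤ ‖z‖) (hzr : ‖z‖ ≤ r) :
    f z + t * Real.log ‖z‖ ≤ M := by
  set K := closedBall (0 : ℂ) r \ ball 0 ρ
  have hK : ∀ {y}, y ∈ K ↔ ρ ≤ ‖y‖ ∧ ‖y‖ ≤ r := by simp [K, and_comm]
  have hne : ∀ {y : ℂ}, y ∈ K → y ≠ 0 := fun hy h0 => by
    simp [h0, hK] at hy; linarith [hy.1]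
  have hlog : ∀ y ∈ K, ContDiffAt ℝ 2 (t • fun w : ℂ => Real.log ‖w‖) y := fun y hy =>
    (contDiffAt_log_norm (hne hy)).const_smul t
  have hsm : ∀ y ∈ K, ContDiffAt ℝ 2 (f + t • fun w : ℂ => Real.log ‖w‖) y := fun y hy =>
    (hf y (hK.mp hy).1 (hK.mp hy).2).1.add (hlog y hy)
  refine (isCompact_closedBall 0 r).diff isOpen_ball |>.le_of_forall_frontier_le_of_laplacian_nonneg
    (fun y hy => (hsm y hy).continuousAt.continuousWithinAt)
    (fun y hy => hsm y (interior_subset hy)) (fun y hy => ?_) (fun y hy => ?_) z (hK.mpr ⟨hρz, hzr⟩)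
  · have hy' := hK.mp (interior_subset hy)
    have hfy := hf y hy'.1 hy'.2
    rw [hfy.1.laplacian_add (hlog y (interior_subset hy)),
      laplacian_smul t (contDiffAt_log_norm (hne (interior_subset hy))),
      laplacian_log_norm (hne (interior_subset hy))]
    simpa using hfy.2
  · have hfr : frontier K ⊆ sphere 0 r ∪ sphere 0 ρ := by
      simp only [K, Set.sdiff_eq]
      refine (frontier_inter_subset _ _).trans ?_
      rw [frontier_compl]
      exact Set.union_subset_union (Set.inter_subset_left.trans frontier_closedBall_subset_sphere)
        (Set.inter_subset_right.trans frontier_ball_subset_sphere)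
    simp only [Pi.add_apply, Pi.smul_apply, smul_eq_mul]
    rcases hfr hy with hy | hy <;> rw [mem_sphere_zero_iff_norm] at hy
    · have : Real.log r ≤ 0 := Real.log_nonpos (by rw [← hy]; positivity) hr
      rw [hy]
      nlinarith [houter y hy]
    · rw [hy]
      linarith [hinner y hy]

theorem isBoundedUnder_le_of_laplacian_nonneg_of_isLittleO_log {f : ℂ → ℝ}
    (hf : ∀ᶠ z in 𝓝[≠] 0, ContDiffAt ℝ 2 f z ∧ 0 ≤ Δ f z)
    (ho : f =o[𝓝[≠] 0] fun z => Real.log ‖z‖) :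
    IsBoundedUnder (· ≤ ·) (𝓝[≠] 0) f := by
  obtain ⟨R, hR, hfR⟩ := eventually_nhdsNE_zero_iff.mp hf
  obtain ⟨r, hr, hrR1⟩ := exists_between (lt_min hR one_pos)
  have hrR : r < R := hrR1.trans_le (min_le_left R 1)
  have hr1 : r < 1 := hrR1.trans_le (min_le_right R 1)
  have hfR' : ∀ y : ℂ, 0 < ‖y‖ → ‖y‖ ≤ r → ContDiffAt ℝ 2 f y ∧ 0 ≤ Δ f y := fun y hy hyr =>
    hfR y (norm_pos_iff.mp hy) (hyr.trans_lt hrR)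
  obtain ⟨M, hM⟩ : BddAbove (f '' sphere 0 r) := (isCompact_sphere 0 r).bddAbove_image
    fun y hy => (hfR' y (by simp [mem_sphere_zero_iff_norm.mp hy, hr])
      (mem_sphere_zero_iff_norm.mp hy).le).1.continuousAt.continuousWithinAt
  refine isBoundedUnder_of_eventually_le (a := max M 0) <| eventually_nhdsNE_zero_iff.mpr
    ⟨r, hr, fun z hz hzr => ?_⟩
  have hlogz : Real.log ‖z‖ < 0 := Real.log_neg (norm_pos_iff.mpr hz) (hzr.trans hr1)
  have key : ∀ t > 0, f z + t * Real.log ‖z‖ ≤ max M 0 := fun t ht => by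
    obtain ⟨ρ₀, hρ₀, hsmall⟩ := eventually_nhdsNE_zero_iff.mp (ho.bound ht)
    obtain ⟨ρ, hρ, hρmin⟩ := exists_between (lt_min hρ₀ (norm_pos_iff.mpr hz))
    have hρz : ρ < ‖z‖ := hρmin.trans_le (min_le_right ρ₀ ‖z‖)
    have hρρ₀ : ρ < ρ₀ := hρmin.trans_le (min_le_left ρ₀ ‖z‖)
    refine add_mul_log_norm_le_of_laplacian_nonneg hρ hr1.le ht.le (le_max_right M 0)
      (fun y hy hyr => hfR' y (hρ.trans_le hy) hyr) (fun y hy => ?_)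
      (fun y hy => (hM ⟨y, mem_sphere_zero_iff_norm.mpr hy, rfl⟩).trans (le_max_left M 0))
      hρz.le hzr.le
    have hlogρ : Real.log ρ < 0 := Real.log_neg hρ (by linarith)
    have := hsmall y (norm_pos_iff.mp (hy ▸ hρ)) (hy ▸ hρρ₀)
    rw [Real.norm_eq_abs, Real.norm_eq_abs, hy, abs_of_neg hlogρ] at this
    linarith [le_abs_self (f y)]
  refine le_of_forall_pos_le_add fun ε hε => ?_
  have := key (ε / -Real.log ‖z‖) (div_pos hε (neg_pos.mpr hlogz))
  rw [div_mul_eq_mul_div, div_neg, mul_div_cancel_right₀ _ hlogz.ne] at this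
  linarith

theorem isBoundedUnder_le_sub_mul_log_norm {f : ℂ → ℝ} {γ c κ : ℝ} (hκ : 0 < κ) (hc : 0 ≤ c)
    (hf : ∀ᶠ z in 𝓝[≠] 0, ContDiffAt ℝ 2 f z ∧ -(c * ‖z‖ ^ (κ - 2)) ≤ Δ f z)
    (hlim : Tendsto (fun z => f z / Real.log ‖z‖) (𝓝[≠] 0) (𝓝 γ)) :
    IsBoundedUnder (· ≤ ·) (𝓝[≠] 0) fun z => f z - γ * Real.log ‖z‖ := by
  have hF : ∀ᶠ z in 𝓝[≠] 0,
      ContDiffAt ℝ 2 (f + (-γ) • (Real.log ‖·‖) + (c / κ ^ 2) • (‖·‖ ^ κ)) z ∧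
        0 ≤ Δ (f + (-γ) • (Real.log ‖·‖) + (c / κ ^ 2) • (‖·‖ ^ κ) : ℂ → ℝ) z := by
    filter_upwards [hf, self_mem_nhdsWithin] with z ⟨hfz, hΔf⟩ (hz : z ≠ 0)
    have hpow₀ : ContDiffAt ℝ 2 (fun z : ℂ => ‖z‖ ^ κ) z :=
      (contDiffAt_id.norm ℝ hz).rpow_const_of_ne (norm_ne_zero_iff.mpr hz)
    have hlog : ContDiffAt ℝ 2 ((-γ) • fun z : ℂ => Real.log ‖z‖) z :=
      (contDiffAt_log_norm hz).const_smul (-γ)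
    have hpow : ContDiffAt ℝ 2 ((c / κ ^ 2) • fun z : ℂ => ‖z‖ ^ κ) z :=
      hpow₀.const_smul (c / κ ^ 2)
    have hsum : ContDiffAt ℝ 2 (f + (-γ) • fun z : ℂ => Real.log ‖z‖) z := hfz.add hlog
    refine ⟨hsum.add hpow, ?_⟩
    rw [hsum.laplacian_add hpow, hfz.laplacian_add hlog, laplacian_smul _ (contDiffAt_log_norm hz),
      laplacian_smul _ hpow₀, laplacian_log_norm hz, laplacian_norm_rpow hz,
      Complex.finrank_real_complex]
    have hbarrier : c / κ ^ 2 * (κ * (κ + (2 : ℕ) - 2) * ‖z‖ ^ (κ - 2)) = c * ‖z‖ ^ (κ - 2) := by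
      push_cast; field_simp; ring
    simp only [smul_eq_mul, mul_zero, add_zero, hbarrier]
    linarith
  have ho := (isLittleO_sub_mul_log_norm hlim).add
    ((isLittleO_norm_rpow_log_norm hκ).const_mul_left (c / κ ^ 2))
  refine (isBoundedUnder_le_of_laplacian_nonneg_of_isLittleO_log hF
    (ho.congr_left fun z => ?_)).mono_le (Eventually.of_forall fun z => ?_)
  · simp only [Pi.add_apply, Pi.smul_apply, smul_eq_mul]
    ring
  · simp only [Pi.add_apply, Pi.smul_apply, smul_eq_mul]
    have : 0 ≤ c / κ ^ 2 * ‖z‖ ^ κ := by positivity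
    linarith

theorem isBoundedUnder_abs_sub_mul_log_norm {f : ℂ → ℝ} {γ c κ : ℝ} (hκ : 0 < κ) (hc : 0 ≤ c)
    (hf : ∀ᶠ z in 𝓝[≠] 0, ContDiffAt ℝ 2 f z ∧ |Δ f z| ≤ c * ‖z‖ ^ (κ - 2))
    (hlim : Tendsto (fun z => f z / Real.log ‖z‖) (𝓝[≠] 0) (𝓝 γ)) :
    IsBoundedUnder (· ≤ ·) (𝓝[≠] 0) fun z => |f z - γ * Real.log ‖z‖| := by
  obtain ⟨C₁, hC₁⟩ := (isBoundedUnder_le_sub_mul_log_norm hκ hc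
    (hf.mono fun _ h => ⟨h.1, (abs_le.mp h.2).1⟩) hlim).eventually_le
  obtain ⟨C₂, hC₂⟩ := (isBoundedUnder_le_sub_mul_log_norm (f := -f) (γ := -γ) hκ hc
    (hf.mono fun _ h => ⟨h.1.neg, by
      rw [laplacian_neg, Pi.neg_apply]; linarith [(abs_le.mp h.2).2]⟩)
    (hlim.neg.congr fun z => (neg_div _ _).symm)).eventually_le
  refine isBoundedUnder_of_eventually_le (a := max C₁ C₂) ?_
  filter_upwards [hC₁, hC₂] with z h₁ h₂
  simp only [Pi.neg_apply] at h₂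
  exact abs_le.mpr ⟨by linarith [le_max_right C₁ C₂], by linarith [le_max_left C₁ C₂]⟩

theorem eventually_exp_le_norm_rpow {g : ℂ → ℝ} {L p : ℝ}
    (hg : Tendsto (fun z => g z / Real.log ‖z‖) (𝓝[≠] 0) (𝓝 L)) (hp : p < L) :
    ∀ᶠ z in 𝓝[≠] 0, Real.exp (g z) ≤ ‖z‖ ^ p := by
  filter_upwards [hg.eventually (eventually_gt_nhds hp),
    tendsto_log_norm_nhdsNE_zero.eventually_lt_atBot 0, self_mem_nhdsWithin] with z hgz hlog hz
  rw [Real.rpow_def_of_pos (norm_pos_iff.mpr hz), Real.exp_le_exp, mul_comm]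
  exact ((lt_div_iff_of_neg hlog).mp hgz).le

theorem lap_eq_laplacian (f : ℂ → ℝ) : lap f = Δ f := by
  rw [laplacian_eq_iteratedFDeriv_complexPlane]
  rfl

theorem SmoothOffZero.contDiffAt {f : ℂ → ℝ} (hf : SmoothOffZero f) {z : ℂ} (hz : z ≠ 0) :
    ContDiffAt ℝ 2 f z :=
  ((hf z hz).contDiffAt (isOpen_compl_singleton.mem_nhds hz)).of_le (by norm_cast)

theorem IsTodaSol.exists_abs_laplacian_le {a b γ δ : ℝ} {u v : ℂ → ℝ} (ha : 0 < a) (hb : 0 < b)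
    (h1 : -2 / a < γ) (h2 : δ < 2 / b) (h3 : γ - δ < 2) (hsol : IsTodaSol a b u v)
    (hu : LogAsymAtZero γ u) (hv : LogAsymAtZero δ v) :
    ∃ κ > (0 : ℝ), ∀ᶠ z in 𝓝[≠] 0,
      (ContDiffAt ℝ 2 u z ∧ |Δ u z| ≤ 4 * ‖z‖ ^ (κ - 2)) ∧
        (ContDiffAt ℝ 2 v z ∧ |Δ v z| ≤ 4 * ‖z‖ ^ (κ - 2)) := by
  obtain ⟨hu_smooth, hv_smooth, hpde⟩ := hsol
  have haγ : 0 < 2 + a * γ := by linarith [(div_lt_iff₀ ha).mp h1]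
  have hbδ : 0 < 2 - b * δ := by linarith [(lt_div_iff₀ hb).mp h2]
  obtain ⟨κ, hκ, hκm⟩ :=
    exists_between (lt_min (lt_min haγ (by linarith : 0 < 2 + (δ - γ))) hbδ)
  have hexp := (eventually_exp_le_norm_rpow (p := κ - 2) (g := fun z => a * u z)
      ((hu.const_mul a).congr fun z => (mul_div_assoc _ _ _).symm)
      (by linarith [(hκm.trans_le (min_le_left _ _)).trans_le (min_le_left _ _)])).and <|
    (eventually_exp_le_norm_rpow (p := κ - 2) (g := fun z => v z - u z)
      ((hv.sub hu).congr fun z => (sub_div _ _ _).symm)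
      (by linarith [(hκm.trans_le (min_le_left _ _)).trans_le (min_le_right _ _)])).and <|
    eventually_exp_le_norm_rpow (p := κ - 2) (g := fun z => -(b * v z))
      ((hv.const_mul b).neg.congr fun z => by rw [neg_div, mul_div_assoc])
      (by linarith [hκm.trans_le (min_le_right _ _)])
  refine ⟨κ, hκ, ?_⟩
  filter_upwards [hexp, self_mem_nhdsWithin] with z ⟨e₁, e₂, e₃⟩ (hz : z ≠ 0)
  rw [← lap_eq_laplacian, ← lap_eq_laplacian, (hpde z hz).1, (hpde z hz).2, abs_mul, abs_mul,
    abs_of_pos (four_pos : (0 : ℝ) < 4)]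
  have hu' := abs_sub_le_of_nonneg_of_le (Real.exp_pos _).le e₁ (Real.exp_pos _).le e₂
  have hv' := abs_sub_le_of_nonneg_of_le (Real.exp_pos _).le e₂ (Real.exp_pos _).le e₃
  exact ⟨⟨hu_smooth.contDiffAt hz, by gcongr⟩, ⟨hv_smooth.contDiffAt hz, by gcongr⟩⟩

/-- For asymptotic data in the open region, the solution has the stronger
asymptotics `u(z) = γ log|z| + O(1)`, `v(z) = δ log|z| + O(1)` at the origin. -/
theorem toda_strong_asymptotics_interior (a b γ δ : ℝ) (ha : 0 < a) (hb : 0 < b)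
    (h1 : -2 / a < γ) (h2 : δ < 2 / b) (h3 : γ - δ < 2)
    (u v : ℂ → ℝ) (hsol : IsTodaSol a b u v) (hasym : HasAsymData γ δ u v) :
    ∃ ε > (0 : ℝ), ∃ C : ℝ, ∀ z : ℂ, z ≠ 0 → ‖z‖ < ε →
      |u z - γ * Real.log (‖z‖)| ≤ C ∧
      |v z - δ * Real.log (‖z‖)| ≤ C := by
  obtain ⟨-, -, hu, hv⟩ := hasym
  obtain ⟨κ, hκ, hΔ⟩ := hsol.exists_abs_laplacian_le ha hb h1 h2 h3 hu hv
  obtain ⟨Cu, hCu⟩ := (isBoundedUnder_abs_sub_mul_log_norm hκ zero_le_four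
    (hΔ.mono fun _ h => h.1) hu).eventually_le
  obtain ⟨Cv, hCv⟩ := (isBoundedUnder_abs_sub_mul_log_norm hκ zero_le_four
    (hΔ.mono fun _ h => h.2) hv).eventually_le
  obtain ⟨ε, hε, hbound⟩ := eventually_nhdsNE_zero_iff.mp (hCu.and hCv)
  exact ⟨ε, hε, max Cu Cv, fun z hz hzε =>
    ⟨(hbound z hz hzε).1.trans (le_max_left _ _), (hbound z hz hzε).2.trans (le_max_right _ _)⟩⟩
end

section
/- Let s₁ᴿ, s₂ᴿ ∈ ℝ and set s₁ = e^{3πi/4}·s₁ᴿ and s₂ = −i·s₂ᴿ. Define p(λ) = λ⁴ − s₁λ³ − s₂λ² + conj(s₁)λ − 1. If λ ∈ ℂ satisfies p(λ) = 0, then λ ≠ 0 and p(1/(iλ)) = 0, i.e. the roots of p are invariant under the map λ ↦ 1/(iλ). -/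
/-! Multiplying `p(1/(iλ))` by `(iλ)⁴` gives `1 - i s₁ λ + s₂ λ² + i³ conj(s₁) λ³ - λ⁴`, which is
`-p(λ)` as soon as `i s₁ = conj s₁`; and `θ = 3π/4` solves `i e^{iθ} = e^{-iθ}`. -/

open Complex Real

theorem quartic_root_inv_mul {K : Type*} [Field K] {ι a b x : K} (hι : ι ^ 2 = -1) (hx : x ≠ 0)
    (hroot : x ^ 4 - a * x ^ 3 - b * x ^ 2 + ι * a * x - 1 = 0) :
    (ι * x)⁻¹ ^ 4 - a * (ι * x)⁻¹ ^ 3 - b * (ι * x)⁻¹ ^ 2 + ι * a * (ι * x)⁻¹ - 1 = 0 := by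
  have hι₀ : ι ≠ 0 := by
    rintro rfl
    simp at hι
  have hι₄ : ι ^ 4 = 1 := by linear_combination (ι ^ 2 - 1) * hι
  field_simp
  linear_combination -hroot - b * x ^ 2 * hι + (a * x ^ 3 - x ^ 4) * hι₄

theorem I_mul_exp_three_pi_div_four :
    I * exp (3 * π * I / 4) = (starRingEnd ℂ) (exp (3 * π * I / 4)) :=
  calc I * exp (3 * π * I / 4) = exp (π / 2 * I) * exp (3 * π * I / 4) := by
        rw [exp_pi_div_two_mul_I]
    _ = exp ((starRingEnd ℂ) (3 * π * I / 4)) := by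
        rw [← Complex.exp_add, exp_eq_exp_iff_exists_int]
        refine ⟨1, ?_⟩
        simp only [map_div₀, map_mul, conj_ofReal, conj_I, map_ofNat]
        push_cast
        ring
    _ = (starRingEnd ℂ) (exp (3 * π * I / 4)) := exp_conj _

/-- Case 4a: with `s₁ = e^{3πi/4} s₁ᴿ`, `s₂ = −i s₂ᴿ` (`s₁ᴿ, s₂ᴿ` real), the roots of
`p(λ) = λ⁴ − s₁λ³ − s₂λ² + conj(s₁)λ − 1` are invariant under `λ ↦ 1/(iλ)`. -/
theorem root_symmetry_case4a (s₁R s₂R : ℝ) :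
    let s₁ : ℂ := Complex.exp (3 * Real.pi * Complex.I / 4) * (s₁R : ℂ)
    let s₂ : ℂ := -Complex.I * (s₂R : ℂ)
    let p : ℂ → ℂ := fun lam =>
      lam ^ 4 - s₁ * lam ^ 3 - s₂ * lam ^ 2 + (starRingEnd ℂ) s₁ * lam - 1
    ∀ lam : ℂ, p lam = 0 → lam ≠ 0 ∧ p (1 / (Complex.I * lam)) = 0 := by
  intro s₁ s₂ p lam hp
  have hlam : lam ≠ 0 := by
    rintro rfl
    simp [p] at hp
  have hs₁ : (starRingEnd ℂ) s₁ = I * s₁ := by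
    rw [map_mul, conj_ofReal, ← I_mul_exp_three_pi_div_four, mul_assoc]
  simp only [p, hs₁, one_div] at hp ⊢
  exact ⟨hlam, quartic_root_inv_mul I_sq hlam hp⟩
end

section
/- Let s₁ᴿ, s₂ᴿ ∈ ℝ and set s₁ = e^{πi/4}·s₁ᴿ and s₂ = i·s₂ᴿ. Define p(λ) = λ⁴ − s₁λ³ − s₂λ² + conj(s₁)λ − 1. If λ ∈ ℂ satisfies p(λ) = 0, then λ ≠ 0 and p(1/(−iλ)) = 0, i.e. the roots of p are invariant under the map λ ↦ 1/(−iλ). -/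
/-! Since `1 / (-iλ) = i / λ`, it suffices that `p(x) = x⁴ - a x³ - b x² + c x - 1` satisfies
`x⁴ p(ι / x) = -p(x)` for `ι² = -1`; comparing coefficients, this holds for every `b` as soon as
`a = ι c`. Here `a = s₁`, `c = conj s₁`, and `e^{πi/4} = i · e^{-πi/4}` gives `s₁ = i · conj s₁`. -/

section StokesQuartic

variable {K : Type*} [Field K]

def stokesQuartic (a b c x : K) : K :=
  x ^ 4 - a * x ^ 3 - b * x ^ 2 + c * x - 1

theorem ne_zero_of_stokesQuartic_eq_zero {a b c x : K} (h : stokesQuartic a b c x = 0) :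
    x ≠ 0 := by
  rintro rfl
  simp [stokesQuartic] at h

theorem pow_four_mul_stokesQuartic_div {ι a b c x : K} (hι : ι ^ 2 = -1) (ha : a = ι * c)
    (hx : x ≠ 0) : x ^ 4 * stokesQuartic a b c (ι / x) = -stokesQuartic a b c x := by
  subst ha
  unfold stokesQuartic
  field_simp
  linear_combination ((ι ^ 2 - 1) * (1 - x * c) - x ^ 2 * b) * hι

theorem stokesQuartic_div_eq_zero {ι a b c x : K} (hι : ι ^ 2 = -1) (ha : a = ι * c)
    (h : stokesQuartic a b c x = 0) : stokesQuartic a b c (ι / x) = 0 := by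
  have hx := ne_zero_of_stokesQuartic_eq_zero h
  have := pow_four_mul_stokesQuartic_div (b := b) hι ha hx
  rw [h, neg_zero] at this
  exact (mul_eq_zero.mp this).resolve_left (pow_ne_zero 4 hx)

end StokesQuartic

theorem Complex.exp_pi_mul_I_div_four_eq_I_mul_conj :
    Complex.exp (Real.pi * Complex.I / 4)
      = Complex.I * starRingEnd ℂ (Complex.exp (Real.pi * Complex.I / 4)) := by
  rw [← Complex.exp_conj]
  nth_rw 2 [← Complex.exp_pi_div_two_mul_I]
  rw [← Complex.exp_add]
  congr 1
  simp only [map_div₀, map_mul, Complex.conj_ofReal, Complex.conj_I, map_ofNat]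
  ring

/-- Case 4b: with `s₁ = e^{πi/4} s₁ᴿ`, `s₂ = i s₂ᴿ` (`s₁ᴿ, s₂ᴿ` real), the roots of
`p(λ) = λ⁴ − s₁λ³ − s₂λ² + conj(s₁)λ − 1` are invariant under `λ ↦ 1/(−iλ)`. -/
theorem root_symmetry_case4b (s₁R s₂R : ℝ) :
    let s₁ : ℂ := Complex.exp (Real.pi * Complex.I / 4) * (s₁R : ℂ)
    let s₂ : ℂ := Complex.I * (s₂R : ℂ)
    let p : ℂ → ℂ := fun lam =>
      lam ^ 4 - s₁ * lam ^ 3 - s₂ * lam ^ 2 + (starRingEnd ℂ) s₁ * lam - 1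
    ∀ lam : ℂ, p lam = 0 → lam ≠ 0 ∧ p (1 / (-Complex.I * lam)) = 0 := by
  intro s₁ s₂ p lam hp
  change stokesQuartic s₁ s₂ (starRingEnd ℂ s₁) lam = 0 at hp
  have hs₁ : s₁ = Complex.I * starRingEnd ℂ s₁ := by
    simp only [s₁, map_mul, Complex.conj_ofReal]
    rw [← mul_assoc, ← Complex.exp_pi_mul_I_div_four_eq_I_mul_conj]
  have hlam := ne_zero_of_stokesQuartic_eq_zero hp
  have hinv : 1 / (-Complex.I * lam) = Complex.I / lam := by
    field_simp
    simp
  refine ⟨hlam, ?_⟩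
  rw [hinv]
  exact stokesQuartic_div_eq_zero Complex.I_sq hs₁ hp
end

section
/- Let ω = e^{2πi/5}, let s₁ᴿ, s₂ᴿ ∈ ℝ, and set s₁ = ω²·s₁ᴿ and s₂ = ω⁴·s₂ᴿ. Define p(λ) = λ⁵ − s₁λ⁴ − s₂λ³ + conj(s₂)λ² + conj(s₁)λ − 1. If λ ∈ ℂ satisfies p(λ) = 0, then λ ≠ 0 and p(1/(ωλ)) = 0, i.e. the roots of p are invariant under the map λ ↦ 1/(ωλ). -/
/-!
Since `|ω| = 1`, `conj s₁ = ω⁻² s₁ᴿ = ω s₁` and `conj s₂ = ω⁻⁴ s₂ᴿ = ω² s₂`. For a quintic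
`p(λ) = λ⁵ − s₁λ⁴ − s₂λ³ + ω²s₂λ² + ωs₁λ − 1` with `ω⁵ = 1`, reversing the coefficients and
rescaling by `ω` gives back `−p`: `(ωλ)⁵ p(1/(ωλ)) = −p(λ)`. As `p(0) = −1`, the claim follows.
-/

open ComplexConjugate

section Quintic

variable {K : Type*} [Field K]

def quintic (s₁ s₂ t₁ t₂ x : K) : K :=
  x ^ 5 - s₁ * x ^ 4 - s₂ * x ^ 3 + t₂ * x ^ 2 + t₁ * x - 1

theorem quintic_zero (s₁ s₂ t₁ t₂ : K) : quintic s₁ s₂ t₁ t₂ 0 = -1 := by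
  simp [quintic]

theorem mul_pow_five_mul_quintic_inv {w s₁ s₂ x : K} (hw : w ^ 5 = 1) (hx : x ≠ 0) :
    (w * x) ^ 5 * quintic s₁ s₂ (w * s₁) (w ^ 2 * s₂) (w * x)⁻¹ =
      -quintic s₁ s₂ (w * s₁) (w ^ 2 * s₂) x := by
  have hw0 : w ≠ 0 := (IsUnit.of_pow_eq_one hw (by norm_num)).ne_zero
  unfold quintic
  field_simp
  linear_combination (s₂ * x ^ 3 + s₁ * x ^ 4 - x ^ 5) * hw

theorem quintic_inv_mul_eq_zero {w s₁ s₂ x : K} (hw : w ^ 5 = 1)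
    (hx : quintic s₁ s₂ (w * s₁) (w ^ 2 * s₂) x = 0) :
    x ≠ 0 ∧ quintic s₁ s₂ (w * s₁) (w ^ 2 * s₂) (w * x)⁻¹ = 0 := by
  have hx0 : x ≠ 0 := by
    rintro rfl
    simp [quintic_zero] at hx
  have hw0 : w ≠ 0 := (IsUnit.of_pow_eq_one hw (by norm_num)).ne_zero
  refine ⟨hx0, ?_⟩
  simpa [hx, hw0, hx0] using mul_pow_five_mul_quintic_inv (s₁ := s₁) (s₂ := s₂) hw hx0

end Quintic

/-- Case 5a: with `ω = e^{2πi/5}`, `s₁ = ω² s₁ᴿ`, `s₂ = ω⁴ s₂ᴿ` (`s₁ᴿ, s₂ᴿ` real),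
the roots of `p(λ) = λ⁵ − s₁λ⁴ − s₂λ³ + conj(s₂)λ² + conj(s₁)λ − 1` are invariant
under `λ ↦ 1/(ωλ)`. -/
theorem root_symmetry_case5a (s₁R s₂R : ℝ) :
    let ω : ℂ := Complex.exp (2 * Real.pi * Complex.I / 5)
    let s₁ : ℂ := ω ^ 2 * (s₁R : ℂ)
    let s₂ : ℂ := ω ^ 4 * (s₂R : ℂ)
    let p : ℂ → ℂ := fun lam =>
      lam ^ 5 - s₁ * lam ^ 4 - s₂ * lam ^ 3 + (starRingEnd ℂ) s₂ * lam ^ 2 +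
        (starRingEnd ℂ) s₁ * lam - 1
    ∀ lam : ℂ, p lam = 0 → lam ≠ 0 ∧ p (1 / (ω * lam)) = 0 := by
  intro ω s₁ s₂ p lam h
  have hω : IsPrimitiveRoot ω 5 := by simpa using Complex.isPrimitiveRoot_exp 5 (by norm_num)
  have hω5 : ω ^ 5 = 1 := hω.pow_eq_one
  have hω0 : ω ≠ 0 := hω.ne_zero (by norm_num)
  have hconj : conj ω = ω⁻¹ := (Complex.inv_eq_conj (hω.norm'_eq_one (by norm_num))).symm
  have hs₁ : conj s₁ = ω * s₁ := by
    simp only [s₁, map_mul, map_pow, hconj, Complex.conj_ofReal]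
    field_simp
    linear_combination -(s₁R : ℂ) * hω5
  have hs₂ : conj s₂ = ω ^ 2 * s₂ := by
    simp only [s₂, map_mul, map_pow, hconj, Complex.conj_ofReal]
    field_simp
    linear_combination -((ω ^ 5 + 1) * s₂R : ℂ) * hω5
  have hp : p = quintic s₁ s₂ (ω * s₁) (ω ^ 2 * s₂) := by
    funext x
    simp only [p, quintic, hs₁, hs₂]
  rw [hp] at h
  rw [hp, one_div]
  exact quintic_inv_mul_eq_zero hω5 h
end

section
/- Let s₁,s₂ ∈ ℂ and work in the 6×6 complex matrices with rows and columns indexed by 0,...,5. Let Q = I + s₂E₂₀ − conj(s₂)E₃₅, Q' = I + s₁E₁₀ − conj(s₁)E₃₄, and let Π be the cyclic permutation matrix with (i,j)-entry equal to 1 exactly when j ≡ i+1 (mod 6). Then the characteristic polynomial det(λI − QQ'Π) equals λ⁶ − s₁λ⁵ − s₂λ⁴ + conj(s₂)λ² + conj(s₁)λ − 1. -/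
open Matrix

/-- `stdE n i j` is the `n×n` complex matrix whose only nonzero entry is a `1`
in position `(i, j)`. -/
noncomputable def stdE (n : ℕ) (i j : Fin n) : Matrix (Fin n) (Fin n) ℂ :=
  Matrix.single i j 1

/-- The cyclic permutation matrix `Π` of size 6: `(i,j)`-entry is `1` iff `j ≡ i+1 (mod 6)`. -/
noncomputable def cyc6 : Matrix (Fin 6) (Fin 6) ℂ :=
  Matrix.of fun i j => if j = i + 1 then 1 else 0

/-!
The two Stokes factors are `1 + X` and `1 + Y` with `X * Y = 0`, since no column index of an
`E_{ij}` in `X` is a row index of one in `Y`; so `Q Q' = 1 + X + Y`. Right multiplication by the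
cyclic shift `Π` moves each `E_{ij}` to `E_{i,j+1}`, hence `λ - Q Q' Π` is a sparse perturbation of
`λ - Π` with four extra entries, and Laplace expansion along the first row gives the polynomial.
-/

theorem Matrix.single_mul_cyclicShift {R : Type*} [Semiring R] {n : ℕ} [NeZero n]
    (i j : Fin n) (c : R) :
    single i j c * of (fun a b : Fin n => if b = a + 1 then (1 : R) else 0) =
      single i (j + 1) c := by
  ext a b
  by_cases ha : a = i
  · subst ha
    by_cases hb : b = j + 1
    · simp [hb]
    · simp [hb, Ne.symm hb]
  · simp [ha, Ne.symm ha]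

theorem stdE_mul_cyc6 (i j : Fin 6) : stdE 6 i j * cyc6 = stdE 6 i (j + 1) :=
  single_mul_cyclicShift i j 1

theorem one_add_mul_one_add_of_mul_eq_zero {R : Type*} [Ring R] {x y : R} (h : x * y = 0) :
    (1 + x) * (1 + y) = 1 + x + y := by
  rw [add_mul, mul_add, mul_add, h]; noncomm_ring

theorem det_perturbed_shift_fin_six {R : Type*} [CommRing R] (a b c d lam : R) :
    det !![lam, -1, 0, 0, 0, 0;
           0, lam - a, -1, 0, 0, 0;
           0, -b, lam, -1, 0, 0;
           c, 0, 0, lam, -1, d;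
           0, 0, 0, 0, lam, -1;
           -1, 0, 0, 0, 0, lam] =
      lam ^ 6 - a * lam ^ 5 - b * lam ^ 4 + c * lam ^ 2 + d * lam - 1 := by
  simp [det_succ_row_zero, Fin.sum_univ_succ, Fin.succAbove]
  ring

theorem stokes_mul_stokes (s₁ s₂ : ℂ) :
    (1 + s₂ • stdE 6 2 0 - (starRingEnd ℂ) s₂ • stdE 6 3 5) *
        (1 + s₁ • stdE 6 1 0 - (starRingEnd ℂ) s₁ • stdE 6 3 4) =
      1 + (s₂ • stdE 6 2 0 - (starRingEnd ℂ) s₂ • stdE 6 3 5) +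
        (s₁ • stdE 6 1 0 - (starRingEnd ℂ) s₁ • stdE 6 3 4) := by
  simp only [add_sub_assoc]
  apply one_add_mul_one_add_of_mul_eq_zero
  simp [stdE, sub_mul, mul_sub]

theorem stokes_mul_stokes_mul_cyc6 (s₁ s₂ : ℂ) :
    (1 + s₂ • stdE 6 2 0 - (starRingEnd ℂ) s₂ • stdE 6 3 5) *
        (1 + s₁ • stdE 6 1 0 - (starRingEnd ℂ) s₁ • stdE 6 3 4) * cyc6 =
      cyc6 + (s₂ • stdE 6 2 1 - (starRingEnd ℂ) s₂ • stdE 6 3 0) +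
        (s₁ • stdE 6 1 1 - (starRingEnd ℂ) s₁ • stdE 6 3 5) := by
  rw [stokes_mul_stokes]
  simp only [add_mul, sub_mul, one_mul, smul_mul, stdE_mul_cyc6]
  rfl

theorem smul_one_sub_stokes_mul_cyc6 (s₁ s₂ lam : ℂ) :
    lam • (1 : Matrix (Fin 6) (Fin 6) ℂ) -
        (cyc6 + (s₂ • stdE 6 2 1 - (starRingEnd ℂ) s₂ • stdE 6 3 0) +
          (s₁ • stdE 6 1 1 - (starRingEnd ℂ) s₁ • stdE 6 3 5)) =
      !![lam, -1, 0, 0, 0, 0;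
         0, lam - s₁, -1, 0, 0, 0;
         0, -s₂, lam, -1, 0, 0;
         (starRingEnd ℂ) s₂, 0, 0, lam, -1, (starRingEnd ℂ) s₁;
         0, 0, 0, 0, lam, -1;
         -1, 0, 0, 0, 0, lam] := by
  ext i j
  fin_cases i <;> fin_cases j <;> simp [stdE, cyc6, one_apply]

/-- The characteristic polynomial of `Q₁ Q_{1⅙} Π` in the `n = 6` cases. -/
theorem charpoly_n6 (s₁ s₂ : ℂ) :
    ∀ lam : ℂ,
      Matrix.det (lam • (1 : Matrix (Fin 6) (Fin 6) ℂ) -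
          (1 + s₂ • stdE 6 2 0 - (starRingEnd ℂ) s₂ • stdE 6 3 5) *
            (1 + s₁ • stdE 6 1 0 - (starRingEnd ℂ) s₁ • stdE 6 3 4) * cyc6) =
        lam ^ 6 - s₁ * lam ^ 5 - s₂ * lam ^ 4 + (starRingEnd ℂ) s₂ * lam ^ 2 +
          (starRingEnd ℂ) s₁ * lam - 1 := by
  intro lam
  rw [stokes_mul_stokes_mul_cyc6, smul_one_sub_stokes_mul_cyc6, det_perturbed_shift_fin_six]
end

section
/- The map F : ℝ² → ℝ² defined by F(γ,δ) = ( 2cos(π(γ+1)/4) + 2cos(π(δ+3)/4), 2 + 4cos(π(γ+1)/4)·cos(π(δ+3)/4) ) is injective on the closed triangular region {(γ,δ) ∈ ℝ² : γ ≥ −1, δ ≤ 1, γ − δ ≤ 2}. -/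
/-! Writing `x = cos (π(γ+1)/4)` and `y = cos (π(δ+3)/4)`, the map is an invertible affine
function of `(x + y, x y)`, which determines the unordered pair `{x, y}`. On the region both
angles lie in `[0, π]` with the first one not larger than the second, so `y ≤ x`; this fixes the
order of the pair, and `cos` is injective on `[0, π]`. -/

open Real

theorem eq_and_eq_of_add_eq_of_mul_eq {R : Type*} [CommRing R] [LinearOrder R]
    [IsStrictOrderedRing R] {x₁ y₁ x₂ y₂ : R} (h₁ : y₁ ≤ x₁) (h₂ : y₂ ≤ x₂)
    (hadd : x₁ + y₁ = x₂ + y₂) (hmul : x₁ * y₁ = x₂ * y₂) : x₁ = x₂ ∧ y₁ = y₂ := by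
  have hroot : (x₁ - x₂) * (y₁ - x₂) = 0 := by linear_combination hmul - x₂ * hadd
  rcases mul_eq_zero.mp hroot with hx | hy
  · constructor <;> linarith
  · have : x₁ = y₂ := by linarith
    constructor <;> linarith

theorem injOn_cos_add_cos_cos_mul_cos :
    Set.InjOn (fun p : ℝ × ℝ => (cos p.1 + cos p.2, cos p.1 * cos p.2))
      {p : ℝ × ℝ | 0 ≤ p.1 ∧ p.1 ≤ p.2 ∧ p.2 ≤ π} := by
  rintro ⟨u₁, v₁⟩ ⟨hu₁, huv₁, hv₁⟩ ⟨u₂, v₂⟩ ⟨hu₂, huv₂, hv₂⟩ h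
  obtain ⟨hadd, hmul⟩ := Prod.mk.inj h
  obtain ⟨hu, hv⟩ := eq_and_eq_of_add_eq_of_mul_eq
    (cos_le_cos_of_nonneg_of_le_pi hu₁ hv₁ huv₁) (cos_le_cos_of_nonneg_of_le_pi hu₂ hv₂ huv₂)
    hadd hmul
  exact Prod.ext
    (injOn_cos ⟨hu₁, huv₁.trans hv₁⟩ ⟨hu₂, huv₂.trans hv₂⟩ hu)
    (injOn_cos ⟨hu₁.trans huv₁, hv₁⟩ ⟨hu₂.trans huv₂, hv₂⟩ hv)

/-- Theorem B(i) injectivity: the map from asymptotic data `(γ, δ)` to Stokes data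
`(s₁ᴿ, −s₂ᴿ)` in the `n = 4` cases is injective on the region
`γ ≥ −1`, `δ ≤ 1`, `γ − δ ≤ 2`. -/
theorem stokes_injective_n4 :
    Set.InjOn
      (fun p : ℝ × ℝ =>
        ((2 * Real.cos (Real.pi * (p.1 + 1) / 4) + 2 * Real.cos (Real.pi * (p.2 + 3) / 4),
          2 + 4 * Real.cos (Real.pi * (p.1 + 1) / 4) * Real.cos (Real.pi * (p.2 + 3) / 4)) :
          ℝ × ℝ))
      {p : ℝ × ℝ | -1 ≤ p.1 ∧ p.2 ≤ 1 ∧ p.1 - p.2 ≤ 2} := by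
  have hπ := pi_pos
  have angles_mem {γ δ : ℝ} (h : -1 ≤ γ ∧ δ ≤ 1 ∧ γ - δ ≤ 2) :
      (π * (γ + 1) / 4, π * (δ + 3) / 4) ∈ {p : ℝ × ℝ | 0 ≤ p.1 ∧ p.1 ≤ p.2 ∧ p.2 ≤ π} := by
    obtain ⟨hγ, hδ, hγδ⟩ := h
    refine ⟨?_, ?_, ?_⟩ <;> dsimp only <;> nlinarith
  rintro ⟨γ₁, δ₁⟩ h₁ ⟨γ₂, δ₂⟩ h₂ h
  obtain ⟨hadd, hmul⟩ := Prod.mk.inj h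
  have hangles := injOn_cos_add_cos_cos_mul_cos (angles_mem h₁) (angles_mem h₂)
    (Prod.ext (by dsimp only at hadd ⊢; linarith) (by dsimp only at hmul ⊢; linarith))
  obtain ⟨hγ, hδ⟩ := Prod.mk.inj hangles
  exact Prod.ext (by nlinarith) (by nlinarith)
end

section
/- The map F : ℝ² → ℝ² defined by F(γ,δ) = ( 1 + 2cos(π(γ+6)/5) + 2cos(π(δ+8)/5), 2 + 2cos(π(γ+6)/5) + 2cos(π(δ+8)/5) + 4cos(π(γ+6)/5)·cos(π(δ+8)/5) ) is injective on the closed triangular region {(γ,δ) ∈ ℝ² : γ ≥ −1, δ ≤ 2, γ − δ ≤ 2}. -/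
set_option maxHeartbeats 800000

open Real

lemma cos_injOn_pi_two_pi' : Set.InjOn Real.cos (Set.Icc Real.pi (2*Real.pi)) := by
  intro x hx y hy h
  have h1 : Real.cos (2*Real.pi - x) = Real.cos (2*Real.pi - y) := by
    rw [Real.cos_two_pi_sub, Real.cos_two_pi_sub, h]
  have h2 := Real.strictAntiOn_cos.injOn
    (Set.mem_Icc.mpr ⟨by linarith [hx.2], by linarith [hx.1]⟩)
    (Set.mem_Icc.mpr ⟨by linarith [hy.2], by linarith [hy.1]⟩) h1
  linarith

lemma cos_mono_pi_two_pi' {x y : ℝ} (hx : Real.pi ≤ x) (hxy : x ≤ y)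
    (hy : y ≤ 2*Real.pi) : Real.cos x ≤ Real.cos y := by
  have h1 : Real.cos x = Real.cos (2*Real.pi - x) := (Real.cos_two_pi_sub x).symm
  have h2 : Real.cos y = Real.cos (2*Real.pi - y) := (Real.cos_two_pi_sub y).symm
  rw [h1, h2]
  exact Real.strictAntiOn_cos.antitoneOn
    ⟨by linarith, by linarith⟩ ⟨by linarith, by linarith⟩ (by linarith)

/-- Theorem B(ii) injectivity: the map from asymptotic data `(γ, δ)` to Stokes data
`(s₁ᴿ, −s₂ᴿ)` in cases 5a, 5b is injective on the region
`γ ≥ −1`, `δ ≤ 2`, `γ − δ ≤ 2`. -/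
theorem stokes_injective_case5ab :
    Set.InjOn
      (fun p : ℝ × ℝ =>
        ((1 + 2 * Real.cos (Real.pi * (p.1 + 6) / 5) + 2 * Real.cos (Real.pi * (p.2 + 8) / 5),
          2 + 2 * Real.cos (Real.pi * (p.1 + 6) / 5) + 2 * Real.cos (Real.pi * (p.2 + 8) / 5) +
            4 * Real.cos (Real.pi * (p.1 + 6) / 5) * Real.cos (Real.pi * (p.2 + 8) / 5)) :
          ℝ × ℝ))
      {p : ℝ × ℝ | -1 ≤ p.1 ∧ p.2 ≤ 2 ∧ p.1 - p.2 ≤ 2} := by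
  intro p hp q hq h
  simp only [Prod.mk.injEq] at h
  obtain ⟨h1, h2⟩ := h
  obtain ⟨hp1, hp2, hp3⟩ := hp
  obtain ⟨hq1, hq2, hq3⟩ := hq
  have pi_pos := Real.pi_pos
  set x₁ := Real.pi * (p.1 + 6) / 5 with hx₁
  set y₁ := Real.pi * (p.2 + 8) / 5 with hy₁
  set x₂ := Real.pi * (q.1 + 6) / 5 with hx₂
  set y₂ := Real.pi * (q.2 + 8) / 5 with hy₂
  have hx₁l : Real.pi ≤ x₁ := by rw [hx₁]; nlinarith
  have hx₂l : Real.pi ≤ x₂ := by rw [hx₂]; nlinarith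
  have hy₁u : y₁ ≤ 2*Real.pi := by rw [hy₁]; nlinarith
  have hy₂u : y₂ ≤ 2*Real.pi := by rw [hy₂]; nlinarith
  have hxy₁ : x₁ ≤ y₁ := by rw [hx₁, hy₁]; nlinarith
  have hxy₂ : x₂ ≤ y₂ := by rw [hx₂, hy₂]; nlinarith
  clear_value x₁ y₁ x₂ y₂
  set u₁ := Real.cos x₁ with hu₁
  set v₁ := Real.cos y₁ with hv₁
  set u₂ := Real.cos x₂ with hu₂
  set v₂ := Real.cos y₂ with hv₂
  clear_value u₁ v₁ u₂ v₂
  have hS : u₁ + v₁ = u₂ + v₂ := by linarith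
  have hP : u₁ * v₁ = u₂ * v₂ := by linarith
  have huv₁ : u₁ ≤ v₁ := by rw [hu₁, hv₁]; exact cos_mono_pi_two_pi' hx₁l hxy₁ hy₁u
  have huv₂ : u₂ ≤ v₂ := by rw [hu₂, hv₂]; exact cos_mono_pi_two_pi' hx₂l hxy₂ hy₂u
  have hd : v₁ - u₁ = v₂ - u₂ := by
    have hsq : (v₁ - u₁)^2 = (v₂ - u₂)^2 := by
      linear_combination (u₁ + v₁ + u₂ + v₂) * hS - 4 * hP
    nlinarith [sq_nonneg (v₁ - u₁ + (v₂ - u₂))]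
  have hu : u₁ = u₂ := by linarith
  have hv : v₁ = v₂ := by linarith
  have hx : x₁ = x₂ := cos_injOn_pi_two_pi' ⟨hx₁l, le_trans hxy₁ hy₁u⟩
    ⟨hx₂l, le_trans hxy₂ hy₂u⟩ (by rw [← hu₁, ← hu₂]; exact hu)
  have hy : y₁ = y₂ := cos_injOn_pi_two_pi'
    ⟨le_trans hx₁l hxy₁, hy₁u⟩ ⟨le_trans hx₂l hxy₂, hy₂u⟩ (by rw [← hv₁, ← hv₂]; exact hv)
  have hp1q1 : p.1 = q.1 := by
    have := mul_left_cancel₀ Real.pi_ne_zero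
      (show Real.pi * (p.1 + 6) = Real.pi * (q.1 + 6) by
        rw [hx₁, hx₂] at hx; linarith)
    linarith
  have hp2q2 : p.2 = q.2 := by
    have := mul_left_cancel₀ Real.pi_ne_zero
      (show Real.pi * (p.2 + 8) = Real.pi * (q.2 + 8) by
        rw [hy₁, hy₂] at hy; linarith)
    linarith
  exact Prod.ext hp1q1 hp2q2
end

section
/- The map F : ℝ² → ℝ² defined by F(γ,δ) = ( 1 + 2cos(π(γ+2)/5) + 2cos(π(δ+4)/5), 2 + 2cos(π(γ+2)/5) + 2cos(π(δ+4)/5) + 4cos(π(γ+2)/5)·cos(π(δ+4)/5) ) is injective on the closed triangular region {(γ,δ) ∈ ℝ² : γ ≥ −2, δ ≤ 1, γ − δ ≤ 2}. -/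
/-!
Write `a = cos (π (γ + 2) / 5)` and `b = cos (π (δ + 4) / 5)`. The map is
`(1 + 2 (a + b), 2 + 2 (a + b) + 4 a b)`, so it determines `a + b` and `a b`, i.e. the unordered
pair `{a, b}`. On the triangle both angles lie in `[0, π]` and the first is at most the second,
so `b ≤ a` fixes the order, and `cos` is injective on `[0, π]`.
-/

open Real Set

theorem eq_and_eq_of_add_eq_of_mul_eq_s18 {R : Type*} [CommRing R] [LinearOrder R]
    [IsStrictOrderedRing R] {a b c d : R} (hab : b ≤ a) (hcd : d ≤ c)
    (hsum : a + b = c + d) (hprod : a * b = c * d) : a = c ∧ b = d := by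
  have hsq : (a - b) ^ 2 = (c - d) ^ 2 := by
    linear_combination (a + b + c + d) * hsum - 4 * hprod
  have hdiff : a - b = c - d :=
    (pow_left_inj₀ (sub_nonneg.2 hab) (sub_nonneg.2 hcd) two_ne_zero).1 hsq
  constructor <;> linarith

theorem eq_and_eq_of_cos_add_cos_eq_of_cos_mul_cos_eq {u₁ v₁ u₂ v₂ : ℝ}
    (hu₁ : u₁ ∈ Icc 0 π) (hv₁ : v₁ ∈ Icc 0 π) (huv₁ : u₁ ≤ v₁)
    (hu₂ : u₂ ∈ Icc 0 π) (hv₂ : v₂ ∈ Icc 0 π) (huv₂ : u₂ ≤ v₂)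
    (hsum : cos u₁ + cos v₁ = cos u₂ + cos v₂) (hprod : cos u₁ * cos v₁ = cos u₂ * cos v₂) :
    u₁ = u₂ ∧ v₁ = v₂ := by
  obtain ⟨hu, hv⟩ := eq_and_eq_of_add_eq_of_mul_eq_s18
    (cos_le_cos_of_nonneg_of_le_pi hu₁.1 hv₁.2 huv₁)
    (cos_le_cos_of_nonneg_of_le_pi hu₂.1 hv₂.2 huv₂) hsum hprod
  exact ⟨injOn_cos hu₁ hu₂ hu, injOn_cos hv₁ hv₂ hv⟩

theorem pi_mul_div_five_mem_Icc {x : ℝ} (h₀ : 0 ≤ x) (h₅ : x ≤ 5) : π * x / 5 ∈ Icc 0 π :=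
  ⟨by positivity, by rw [div_le_iff₀ (by norm_num)]; nlinarith [pi_pos]⟩

theorem eq_of_pi_mul_div_five_eq {x y : ℝ} (h : π * x / 5 = π * y / 5) : x = y := by
  field_simp at h
  exact h

/-- Theorem B(iii) injectivity: the map from asymptotic data `(γ, δ)` to Stokes data
`(s₁ᴿ, −s₂ᴿ)` in cases 5c, 5d, 5e is injective on the region
`γ ≥ −2`, `δ ≤ 1`, `γ − δ ≤ 2`. -/
theorem stokes_injective_case5cde :
    Set.InjOn
      (fun p : ℝ × ℝ =>
        ((1 + 2 * Real.cos (Real.pi * (p.1 + 2) / 5) + 2 * Real.cos (Real.pi * (p.2 + 4) / 5),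
          2 + 2 * Real.cos (Real.pi * (p.1 + 2) / 5) + 2 * Real.cos (Real.pi * (p.2 + 4) / 5) +
            4 * Real.cos (Real.pi * (p.1 + 2) / 5) * Real.cos (Real.pi * (p.2 + 4) / 5)) :
          ℝ × ℝ))
      {p : ℝ × ℝ | -2 ≤ p.1 ∧ p.2 ≤ 1 ∧ p.1 - p.2 ≤ 2} := by
  rintro ⟨γ₁, δ₁⟩ ⟨hγ₁, hδ₁, h₁⟩ ⟨γ₂, δ₂⟩ ⟨hγ₂, hδ₂, h₂⟩ heq
  dsimp only at hγ₁ hδ₁ h₁ hγ₂ hδ₂ h₂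
  obtain ⟨hs₁, hs₂⟩ := Prod.mk.inj heq
  obtain ⟨hγ, hδ⟩ := eq_and_eq_of_cos_add_cos_eq_of_cos_mul_cos_eq
    (pi_mul_div_five_mem_Icc (x := γ₁ + 2) (by linarith) (by linarith))
    (pi_mul_div_five_mem_Icc (x := δ₁ + 4) (by linarith) (by linarith))
    (by gcongr π * ?_ / 5; linarith)
    (pi_mul_div_five_mem_Icc (x := γ₂ + 2) (by linarith) (by linarith))
    (pi_mul_div_five_mem_Icc (x := δ₂ + 4) (by linarith) (by linarith))
    (by gcongr π * ?_ / 5; linarith)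
    (by linarith) (by linarith)
  exact Prod.ext (by linarith [eq_of_pi_mul_div_five_eq hγ])
    (by linarith [eq_of_pi_mul_div_five_eq hδ])
end

section
/- The map F : ℝ² → ℝ² defined by F(γ,δ) = ( 2cos(π(γ+2)/6) + 2cos(π(δ+4)/6), 1 + 4cos(π(γ+2)/6)·cos(π(δ+4)/6) ) is injective on the closed triangular region {(γ,δ) ∈ ℝ² : γ ≥ −2, δ ≤ 2, γ − δ ≤ 2}. -/
/-!
In the angles `a = π(γ + 2)/6`, `b = π(δ + 4)/6` the region becomes `0 ≤ a ≤ b ≤ π` and the map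
reads `(2 (cos a + cos b), 1 + 4 cos a cos b)`. Sum and product determine the pair `cos b ≤ cos a`
as the two roots of one quadratic, and `cos` is injective on `[0, π]`.
-/

open Real Set

theorem eq_and_eq_of_add_eq_of_mul_eq_s19 {R : Type*} [CommRing R] [LinearOrder R]
    [IsStrictOrderedRing R] {x y x' y' : R} (h : y ≤ x) (h' : y' ≤ x')
    (hs : x + y = x' + y') (hp : x * y = x' * y') : x = x' ∧ y = y' := by
  have hsq : (x - y) ^ 2 = (x' - y') ^ 2 := by
    linear_combination (x + y + x' + y') * hs - 4 * hp
  have hdiff : x - y = x' - y' :=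
    (sq_eq_sq₀ (sub_nonneg.mpr h) (sub_nonneg.mpr h')).mp hsq
  constructor <;> linarith

theorem injOn_cos_add_cos_mul_cos :
    InjOn (fun q : ℝ × ℝ => (2 * cos q.1 + 2 * cos q.2, 1 + 4 * cos q.1 * cos q.2))
      {q : ℝ × ℝ | 0 ≤ q.1 ∧ q.1 ≤ q.2 ∧ q.2 ≤ π} := by
  rintro ⟨a, b⟩ ⟨ha, hab, hb⟩ ⟨a', b'⟩ ⟨ha', hab', hb'⟩ h
  simp only [Prod.mk.injEq] at h
  obtain ⟨hca, hcb⟩ := eq_and_eq_of_add_eq_of_mul_eq_s19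
    (cos_le_cos_of_nonneg_of_le_pi ha hb hab) (cos_le_cos_of_nonneg_of_le_pi ha' hb' hab')
    (by linarith) (by linarith)
  exact Prod.ext (injOn_cos ⟨ha, hab.trans hb⟩ ⟨ha', hab'.trans hb'⟩ hca)
    (injOn_cos ⟨ha.trans hab, hb⟩ ⟨ha'.trans hab', hb'⟩ hcb)

noncomputable def stokesAngles (p : ℝ × ℝ) : ℝ × ℝ :=
  (π * (p.1 + 2) / 6, π * (p.2 + 4) / 6)

theorem stokesAngles_injective : Function.Injective stokesAngles := by
  rintro ⟨γ, δ⟩ ⟨γ', δ'⟩ h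
  simp only [stokesAngles, Prod.mk.injEq] at h
  obtain ⟨hγ, hδ⟩ := h
  have hπ : π ≠ 0 := pi_ne_zero
  exact Prod.ext (by field_simp at hγ; linarith) (by field_simp at hδ; linarith)

theorem mapsTo_stokesAngles :
    MapsTo stokesAngles {p : ℝ × ℝ | -2 ≤ p.1 ∧ p.2 ≤ 2 ∧ p.1 - p.2 ≤ 2}
      {q : ℝ × ℝ | 0 ≤ q.1 ∧ q.1 ≤ q.2 ∧ q.2 ≤ π} := by
  rintro ⟨γ, δ⟩ ⟨hγ, hδ, hγδ⟩
  have hπ : 0 ≤ π := pi_pos.le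
  simp only [stokesAngles, mem_ofPred_eq]
  refine ⟨?_, ?_, ?_⟩
  · have := mul_nonneg hπ (by linarith : (0 : ℝ) ≤ γ + 2); linarith
  · have := mul_le_mul_of_nonneg_left (by linarith : γ + 2 ≤ δ + 4) hπ; linarith
  · have := mul_le_mul_of_nonneg_left (by linarith : δ + 4 ≤ 6) hπ; linarith

/-- Theorem B(iv) injectivity: the map from asymptotic data `(γ, δ)` to Stokes data
`(s₁ᴿ, −s₂ᴿ)` in the `n = 6` cases is injective on the region
`γ ≥ −2`, `δ ≤ 2`, `γ − δ ≤ 2`. -/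
theorem stokes_injective_n6 :
    Set.InjOn
      (fun p : ℝ × ℝ =>
        ((2 * Real.cos (Real.pi * (p.1 + 2) / 6) + 2 * Real.cos (Real.pi * (p.2 + 4) / 6),
          1 + 4 * Real.cos (Real.pi * (p.1 + 2) / 6) * Real.cos (Real.pi * (p.2 + 4) / 6)) :
          ℝ × ℝ))
      {p : ℝ × ℝ | -2 ≤ p.1 ∧ p.2 ≤ 2 ∧ p.1 - p.2 ≤ 2} :=
  fun _ hp _ hq h => stokesAngles_injective <|
    injOn_cos_add_cos_mul_cos (mapsTo_stokesAngles hp) (mapsTo_stokesAngles hq) h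
end
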